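/- arXiv:0706.2116 — 5 statements merged into one kernel-verified Lean document; each statement's English description precedes it below -/
import Mathlib

section
/- Let A ⊂ ℝ^d be a finite set whose convex hull Δ := conv(A) has dimension d, and let β_a : Δ → ℝ (a ∈ A) be normalized blending functions whose tautological map τ(x) = Σ_{a∈A} β_a(x)·a is a homeomorphism from Δ onto Δ, with inverse τ⁻¹. Then the functions γ_a := β_a ∘ τ⁻¹ (a ∈ A) are normalized blending functions having linear precision: γ_a(x) ≥ 0, Σ_{a∈A} γ_a(x) = 1, and Σ_{a∈A} γ_a(x)·a = x for all x ∈ Δ. -/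
/-- If the tautological map `τ` of a patch is a homeomorphism of
`Δ` onto `Δ`, then the reparametrized functions `γ_a := β_a ∘ τ⁻¹` are normalized
blending functions having linear precision: they are nonnegative, continuous, sum
to `1`, and satisfy `∑_{a∈A} γ_a(x) • a = x` on `Δ`. -/
theorem reparametrization_by_inverse_tautological_has_linear_precision
    (d : ℕ) (A : Finset (Fin d → ℝ))
    (Δ : Set (Fin d → ℝ)) (hΔ : Δ = convexHull ℝ (A : Set (Fin d → ℝ)))
    (hdim : affineSpan ℝ (A : Set (Fin d → ℝ)) = ⊤)
    (β : (Fin d → ℝ) → (Fin d → ℝ) → ℝ)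
    (hcont : ∀ a ∈ A, ContinuousOn (β a) Δ)
    (hnonneg : ∀ a ∈ A, ∀ x ∈ Δ, 0 ≤ β a x)
    (hnorm : ∀ x ∈ Δ, ∑ a ∈ A, β a x = 1)
    (τ : Δ ≃ₜ Δ) (hτ : ∀ x : Δ, (τ x : Fin d → ℝ) = ∑ a ∈ A, β a x • a)
    (γ : (Fin d → ℝ) → Δ → ℝ) (hγ : ∀ a, ∀ x : Δ, γ a x = β a (τ.symm x)) :
    (∀ a ∈ A, ∀ x : Δ, 0 ≤ γ a x) ∧
    (∀ a ∈ A, Continuous (γ a)) ∧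
    (∀ x : Δ, ∑ a ∈ A, γ a x = 1) ∧
    (∀ x : Δ, ∑ a ∈ A, γ a x • a = (x : Fin d → ℝ)) := by
  refine ⟨?_, ?_, ?_, ?_⟩
  · intro a ha x
    rw [hγ]
    exact hnonneg a ha _ (τ.symm x).2
  · intro a ha
    have : γ a = (Δ.restrict (β a)) ∘ τ.symm := by
      funext x; simp [hγ, Set.restrict]
    rw [this]
    exact ((continuousOn_iff_continuous_restrict.1 (hcont a ha))).comp
      τ.symm.continuous
  · intro x
    simp only [hγ]
    exact hnorm _ (τ.symm x).2
  · intro x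
    simp only [hγ]
    have := hτ (τ.symm x)
    rw [τ.apply_symm_apply] at this
    exact this.symm
end

section
/- Let A ⊂ ℝ^d be a finite set that affinely spans ℝ^d and let w = (w_a)_{a∈A} be positive real weights. Then the map μ from the positive orthant ℝ_{>0}^d to ℝ^d defined by μ(t) = (Σ_{a∈A} w_a t^a · a) / (Σ_{a∈A} w_a t^a), where t^a := Π_{i=1}^d t_i^{a_i} (real powers), is injective and its image is exactly the interior of the convex hull of A. -/
/-!
For `t` in the positive orthant, `t ^ a = e^{θ a}` where `θ` is the functional
`a ↦ ∑ i, a i * log t_i`, and `t ↦ θ` is a bijection onto the dual space. So `μ` becomes the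
moment map `θ ↦ ∑ w_a e^{θ a} a / ∑ w_a e^{θ a}`, the gradient of the strictly convex function
`log ∑ w_a e^{θ a}`.

Injectivity: pairing with `θ - η`, the value at `θ` is the mean of `θ - η` under the weights of
`η` tilted by `e^{θ - η}`, and tilting by `e^s` strictly raises the mean of any nonconstant `s`;
`θ - η` is nonconstant on `A` because `A` affinely spans.

Image: each value is a center of mass of `A` with positive weights, hence interior. Conversely,
for `m` in the interior, `θ ↦ ∑ w_a e^{θ (a - m)}` grows like `e^{c ‖θ‖}`, so it attains a minimum,
and its vanishing derivative there says exactly that the moment map takes the value `m`.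
-/

open Finset Filter Topology

lemma Real.exp_sub_exp_mul_sub_pos {x y : ℝ} (h : x ≠ y) :
    0 < (Real.exp x - Real.exp y) * (x - y) := by
  rcases h.lt_or_gt with h | h
  · exact mul_pos_of_neg_of_neg (sub_neg.2 (Real.exp_lt_exp.2 h)) (sub_neg.2 h)
  · exact mul_pos (sub_pos.2 (Real.exp_lt_exp.2 h)) (sub_pos.2 h)

lemma Real.exp_sub_exp_mul_sub_nonneg (x y : ℝ) : 0 ≤ (Real.exp x - Real.exp y) * (x - y) := by
  rcases eq_or_ne x y with rfl | h
  · simp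
  · exact (Real.exp_sub_exp_mul_sub_pos h).le

namespace Finset

section CenterMass

variable {ι R E F : Type*} [Field R] [AddCommGroup E] [Module R E]

lemma map_centerMass [AddCommGroup F] [Module R F] {M : Type*} [FunLike M E F]
    [LinearMapClass M R E F] (f : M) (t : Finset ι) (w : ι → R) (z : ι → E) :
    f (t.centerMass w z) = t.centerMass w (fun i => f (z i)) := by
  simp only [centerMass, map_smul, map_sum]

lemma centerMass_eq_of_sum_smul_sub_eq_zero {t : Finset ι} {w : ι → R} {z : ι → E} {m : E}
    (hw : ∑ i ∈ t, w i ≠ 0) (h : ∑ i ∈ t, w i • (z i - m) = 0) : t.centerMass w z = m := by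
  simp only [smul_sub, sum_sub_distrib, ← sum_smul, sub_eq_zero] at h
  rw [centerMass, h, inv_smul_smul₀ hw]

end CenterMass

variable {ι : Type*}

lemma sum_sum_mul_sub_mul_sub (A : Finset ι) (p f g : ι → ℝ) :
    ∑ i ∈ A, ∑ j ∈ A, p i * p j * ((f i - f j) * (g i - g j)) =
      2 * ((∑ i ∈ A, p i * f i * g i) * ∑ i ∈ A, p i -
        (∑ i ∈ A, p i * f i) * ∑ i ∈ A, p i * g i) := by
  calc _ = ∑ i ∈ A, ∑ j ∈ A, (p i * f i * g i * p j + p j * f j * g j * p i -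
        p i * f i * (p j * g j) - p j * f j * (p i * g i)) :=
        sum_congr rfl fun i _ => sum_congr rfl fun j _ => by ring
    _ = _ := by
      simp only [sum_add_distrib, sum_sub_distrib]
      rw [sum_comm (f := fun i j => p j * f j * g j * p i),
        sum_comm (f := fun i j => p j * f j * (p i * g i))]
      simp only [← sum_mul_sum]
      ring

lemma centerMass_lt_centerMass_mul_exp {A : Finset ι} {p s : ι → ℝ} (hp : ∀ i ∈ A, 0 < p i)
    (hs : ∃ i ∈ A, ∃ j ∈ A, s i ≠ s j) :
    A.centerMass p s < A.centerMass (fun i => p i * Real.exp (s i)) s := by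
  obtain ⟨i, hi, j, hj, hij⟩ := hs
  have hterm : ∀ i ∈ A, ∀ j ∈ A,
      0 ≤ p i * p j * ((Real.exp (s i) - Real.exp (s j)) * (s i - s j)) := fun i hi j hj =>
    mul_nonneg (mul_pos (hp i hi) (hp j hj)).le (Real.exp_sub_exp_mul_sub_nonneg _ _)
  have hcov : 0 < ∑ i ∈ A, ∑ j ∈ A,
      p i * p j * ((Real.exp (s i) - Real.exp (s j)) * (s i - s j)) :=
    sum_pos' (fun i hi => sum_nonneg (hterm i hi)) ⟨i, hi, sum_pos' (hterm i hi)
      ⟨j, hj, mul_pos (mul_pos (hp i hi) (hp j hj)) (Real.exp_sub_exp_mul_sub_pos hij)⟩⟩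
  rw [sum_sum_mul_sub_mul_sub] at hcov
  have hA : A.Nonempty := ⟨i, hi⟩
  have hp₀ : 0 < ∑ i ∈ A, p i := sum_pos hp hA
  have hp₁ : 0 < ∑ i ∈ A, p i * Real.exp (s i) :=
    sum_pos (fun i hi => mul_pos (hp i hi) (Real.exp_pos _)) hA
  simp only [centerMass, smul_eq_mul, inv_mul_eq_div]
  rw [div_lt_div_iff₀ hp₀ hp₁]
  linarith

variable {E : Type*} [NormedAddCommGroup E] [NormedSpace ℝ E] [FiniteDimensional ℝ E]

lemma sum_smul_mem_interior_convexHull {A : Finset E}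
    (hA : affineSpan ℝ (A : Set E) = ⊤) {p : E → ℝ} (hp : ∀ a ∈ A, 0 < p a)
    (hp1 : ∑ a ∈ A, p a = 1) :
    ∑ a ∈ A, p a • a ∈ interior (convexHull ℝ (A : Set E)) := by
  obtain ⟨x₀, hx₀⟩ := interior_convexHull_nonempty_iff_affineSpan_eq_top.2 hA
  obtain ⟨q, hq0, hq1, rfl⟩ := mem_convexHull'.1 (interior_subset hx₀)
  have hsmall : ∀ᶠ ε in 𝓝[>] (0 : ℝ), (∀ a ∈ A, ε ≤ p a) ∧ ε < 1 :=
    ((eventually_all_finset A).2 fun a ha => eventually_le_nhds (hp a ha)).and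
      (eventually_lt_nhds one_pos) |>.filter_mono nhdsWithin_le_nhds
  obtain ⟨ε, ⟨hεp, hε1⟩, hε : 0 < ε⟩ := (hsmall.and self_mem_nhdsWithin).exists
  -- `p = ε q + (1 - ε) r`, and `r` is again a probability vector since `q ≤ 1` and `ε ≤ p`
  set r : E → ℝ := fun a => (1 - ε)⁻¹ * (p a - ε * q a)
  have hr0 : ∀ a ∈ A, 0 ≤ r a := fun a ha => by
    have : q a ≤ 1 := hq1 ▸ single_le_sum hq0 ha
    have : ε * q a ≤ p a := by nlinarith [hεp a ha, hq0 a ha]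
    exact mul_nonneg (inv_nonneg.2 (by linarith)) (by linarith)
  have hr1 : ∑ a ∈ A, r a = 1 := by
    simp only [r, ← mul_sum, sum_sub_distrib, hp1, hq1]
    field_simp [(by linarith : (1 - ε) ≠ 0)]
  have hcombo : ε • ∑ a ∈ A, q a • a + (1 - ε) • ∑ a ∈ A, r a • a = ∑ a ∈ A, p a • a := by
    simp only [smul_sum, smul_smul, ← sum_add_distrib, ← add_smul]
    refine sum_congr rfl fun a _ => ?_
    congr 1
    simp only [r]
    field_simp [(by linarith : (1 - ε) ≠ 0)]
    ring
  rw [← hcombo]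
  exact (convex_convexHull ℝ _).combo_interior_self_mem_interior hx₀
    (mem_convexHull'.2 ⟨r, hr0, hr1, rfl⟩) hε (by linarith) (by ring)

lemma centerMass_id_mem_interior_convexHull {A : Finset E}
    (hA : affineSpan ℝ (A : Set E) = ⊤) {p : E → ℝ} (hp : ∀ a ∈ A, 0 < p a) :
    A.centerMass p id ∈ interior (convexHull ℝ (A : Set E)) := by
  have hsum : 0 < ∑ a ∈ A, p a :=
    sum_pos hp (by simpa using AffineSubspace.nonempty_of_affineSpan_eq_top ℝ E E hA)
  rw [centerMass, smul_sum]
  simp only [smul_smul, id]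
  exact sum_smul_mem_interior_convexHull hA (fun a ha => mul_pos (inv_pos.2 hsum) (hp a ha))
    (by rw [← mul_sum, inv_mul_cancel₀ hsum.ne'])

end Finset

lemma LinearMap.exists_apply_ne_apply_of_affineSpan_eq_top {k E F : Type*} [Ring k]
    [AddCommGroup E] [Module k E] [AddCommGroup F] [Module k F] {A : Set E}
    (hA : affineSpan k A = ⊤) {φ : E →ₗ[k] F} (hφ : φ ≠ 0) : ∃ a ∈ A, ∃ b ∈ A, φ a ≠ φ b := by
  contrapose! hφ
  rw [← LinearMap.ker_eq_top, eq_top_iff,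
    ← AffineSubspace.vectorSpan_eq_top_of_affineSpan_eq_top k E E hA, vectorSpan_def,
    Submodule.span_le]
  rintro _ ⟨a, ha, b, hb, rfl⟩
  simp [hφ a ha b hb]

section MomentMap

variable {E : Type*} [NormedAddCommGroup E] [NormedSpace ℝ E]

lemma ContinuousLinearMap.exists_norm_lt_one_half_opNorm_le (θ : StrongDual ℝ E) :
    ∃ y : E, ‖y‖ < 1 ∧ ‖θ‖ / 2 ≤ θ y := by
  rcases eq_or_ne θ 0 with rfl | hθ
  · exact ⟨0, by simp⟩
  obtain ⟨x, hx, hθx⟩ := θ.exists_lt_apply_of_lt_opNorm (half_lt_self (norm_pos_iff.2 hθ))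
  rcases le_total 0 (θ x) with h | h
  · exact ⟨x, hx, by rw [Real.norm_of_nonneg h] at hθx; exact hθx.le⟩
  · exact ⟨-x, by rwa [norm_neg], by rw [Real.norm_of_nonpos h] at hθx; simpa using hθx.le⟩

lemma exists_pos_mul_norm_le_apply_sub_of_mem_interior_convexHull {A : Finset E} {m : E}
    (hm : m ∈ interior (convexHull ℝ (A : Set E))) :
    ∃ c > 0, ∀ θ : StrongDual ℝ E, ∃ a ∈ A, c * ‖θ‖ ≤ θ (a - m) := by
  obtain ⟨r, hr, hball⟩ := Metric.mem_nhds_iff.1 (mem_interior_iff_mem_nhds.1 hm)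
  refine ⟨r / 2, by positivity, fun θ => ?_⟩
  obtain ⟨y, hy, hθy⟩ := θ.exists_norm_lt_one_half_opNorm_le
  have hmem : m + r • y ∈ convexHull ℝ (A : Set E) := hball <| by
    rw [Metric.mem_ball, dist_self_add_left, norm_smul, Real.norm_of_nonneg hr.le]
    exact mul_lt_of_lt_one_right hr hy
  obtain ⟨a, ha, hle⟩ := (θ.toLinearMap.convexOn convex_univ).exists_ge_of_mem_convexHull
    (Set.subset_univ _) hmem
  refine ⟨a, ha, ?_⟩
  simp only [ContinuousLinearMap.coe_coe, map_add, map_smul, smul_eq_mul] at hle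
  rw [map_sub]
  nlinarith

noncomputable def momentMap (A : Finset E) (w : E → ℝ) (θ : StrongDual ℝ E) : E :=
  A.centerMass (fun a => w a * Real.exp (θ a)) id

variable {A : Finset E} {w : E → ℝ}

theorem momentMap_injective (hA : affineSpan ℝ (A : Set E) = ⊤) (hw : ∀ a ∈ A, 0 < w a) :
    Function.Injective (momentMap A w) := by
  intro θ η h
  by_contra hne
  have hv : (θ - η : StrongDual ℝ E).toLinearMap ≠ 0 := by
    simpa [sub_eq_zero] using hne
  have hlt := centerMass_lt_centerMass_mul_exp
    (fun a ha => mul_pos (hw a ha) (Real.exp_pos (η a)))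
    (LinearMap.exists_apply_ne_apply_of_affineSpan_eq_top hA hv)
  have htilt : (fun a => w a * Real.exp (η a) * Real.exp ((θ - η).toLinearMap a)) =
      fun a => w a * Real.exp (θ a) := by
    ext a
    simp [mul_assoc, ← Real.exp_add]
  rw [htilt] at hlt
  have key : (θ - η) (momentMap A w η) < (θ - η) (momentMap A w θ) := by
    rw [momentMap, momentMap, map_centerMass, map_centerMass]
    exact hlt
  exact key.ne (by rw [h])

variable [FiniteDimensional ℝ E]

lemma tendsto_sum_mul_exp_apply_sub_cocompact (hw : ∀ a ∈ A, 0 < w a) {m : E}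
    (hm : m ∈ interior (convexHull ℝ (A : Set E))) :
    Tendsto (fun θ : StrongDual ℝ E => ∑ a ∈ A, w a * Real.exp (θ (a - m)))
      (cocompact _) atTop := by
  obtain ⟨c, hc, hcoer⟩ := exists_pos_mul_norm_le_apply_sub_of_mem_interior_convexHull hm
  have hA : A.Nonempty := coe_nonempty.1 (convexHull_nonempty_iff.1 ⟨m, interior_subset hm⟩)
  have hwmin : 0 < A.inf' hA w := (lt_inf'_iff hA).2 hw
  refine tendsto_atTop_mono (fun θ => ?_) <| (Real.tendsto_exp_atTop.comp
    (tendsto_norm_cocompact_atTop.const_mul_atTop hc)).const_mul_atTop hwmin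
  obtain ⟨a, ha, hle⟩ := hcoer θ
  calc A.inf' hA w * Real.exp (c * ‖θ‖) ≤ w a * Real.exp (θ (a - m)) :=
        mul_le_mul (inf'_le _ ha) (Real.exp_le_exp.2 hle) (Real.exp_pos _).le (hw a ha).le
    _ ≤ ∑ a ∈ A, w a * Real.exp (θ (a - m)) :=
        single_le_sum (f := fun a => w a * Real.exp (θ (a - m)))
          (fun b hb => (mul_pos (hw b hb) (Real.exp_pos _)).le) ha

lemma exists_momentMap_eq (hw : ∀ a ∈ A, 0 < w a) {m : E}
    (hm : m ∈ interior (convexHull ℝ (A : Set E))) : ∃ θ, momentMap A w θ = m := by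
  set G : StrongDual ℝ E → ℝ := fun θ => ∑ a ∈ A, w a * Real.exp (θ (a - m))
  have hG : ∀ θ, HasFDerivAt G
      (∑ a ∈ A, (w a * Real.exp (θ (a - m))) • ContinuousLinearMap.apply ℝ ℝ (a - m)) θ :=
    fun θ => HasFDerivAt.fun_sum fun a _ => by
      rw [mul_smul]
      exact ((Real.hasDerivAt_exp _).comp_hasFDerivAt θ
        (ContinuousLinearMap.apply ℝ ℝ (a - m)).hasFDerivAt).const_mul (w a)
  obtain ⟨θ, hθ⟩ := (continuous_iff_continuousAt.2 fun θ => (hG θ).continuousAt).exists_forall_le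
    (tendsto_sum_mul_exp_apply_sub_cocompact hw hm)
  have hcrit := IsLocalMin.hasFDerivAt_eq_zero (Eventually.of_forall hθ) (hG θ)
  refine ⟨θ, ?_⟩
  have hshift : momentMap A w θ = A.centerMass (fun a => w a * Real.exp (θ (a - m))) id := by
    rw [momentMap, ← centerMass_smul_left A id (Real.exp_pos (-θ m)).ne']
    congr 1
    ext a
    simp only [Pi.smul_apply, smul_eq_mul, sub_eq_add_neg, map_add, map_neg, Real.exp_add]
    ring
  have hA : A.Nonempty := coe_nonempty.1 (convexHull_nonempty_iff.1 ⟨m, interior_subset hm⟩)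
  rw [hshift]
  refine centerMass_eq_of_sum_smul_sub_eq_zero
    (sum_pos (fun a ha => mul_pos (hw a ha) (Real.exp_pos _)) hA).ne'
    (SeparatingDual.eq_zero_of_forall_dual_eq_zero (R := ℝ) fun φ => ?_)
  simpa using congrArg (· φ) hcrit

theorem range_momentMap (hA : affineSpan ℝ (A : Set E) = ⊤) (hw : ∀ a ∈ A, 0 < w a) :
    Set.range (momentMap A w) = interior (convexHull ℝ (A : Set E)) :=
  Set.Subset.antisymm
    (Set.range_subset_iff.2 fun _ => centerMass_id_mem_interior_convexHull hA
      fun a ha => mul_pos (hw a ha) (Real.exp_pos _))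
    fun _ hm => exists_momentMap_eq hw hm

end MomentMap

section LogPairing

variable {d : ℕ}

noncomputable def logPairing (t : Fin d → ℝ) : StrongDual ℝ (Fin d → ℝ) :=
  ∑ i, Real.log (t i) • ContinuousLinearMap.proj i

lemma logPairing_apply (t x : Fin d → ℝ) : logPairing t x = ∑ i, x i * Real.log (t i) := by
  simp [logPairing, mul_comm]

lemma prod_rpow_eq_exp_logPairing {t : Fin d → ℝ} (ht : ∀ i, 0 < t i) (a : Fin d → ℝ) :
    ∏ i, t i ^ a i = Real.exp (logPairing t a) := by
  rw [logPairing_apply, Real.exp_sum]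
  exact prod_congr rfl fun i _ => by rw [Real.rpow_def_of_pos (ht i), mul_comm]

lemma injOn_logPairing : Set.InjOn logPairing {t : Fin d → ℝ | ∀ i, 0 < t i} := by
  intro s hs t ht h
  funext i
  have := congrArg (· (Pi.single i 1)) h
  simp only [logPairing_apply, Pi.single_apply, ite_mul, one_mul, zero_mul,
    sum_ite_eq', mem_univ, if_true] at this
  exact Real.log_injOn_pos (hs i) (ht i) this

lemma image_logPairing : logPairing '' {t : Fin d → ℝ | ∀ i, 0 < t i} = Set.univ := by
  refine Set.eq_univ_of_forall fun θ =>
    ⟨fun i => Real.exp (θ (Pi.single i 1)), fun i => Real.exp_pos _, ?_⟩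
  ext x
  conv_rhs => rw [← univ_sum_single x]
  simp only [logPairing_apply, Real.log_exp, map_sum]
  refine sum_congr rfl fun i _ => ?_
  rw [← smul_eq_mul, ← map_smul, ← Pi.single_smul', smul_eq_mul, mul_one]

end LogPairing

/-- For a finite set `A ⊂ ℝ^d` affinely spanning `ℝ^d` and positive
weights `w`, the map `μ(t) = (∑_{a∈A} w_a t^a • a) / (∑_{a∈A} w_a t^a)` (with
`t^a = ∏ i, (t i)^(a i)` real powers) is injective on the positive orthant and its
image is exactly the interior of the convex hull of `A`. -/
theorem toric_moment_map_injective_image_interior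
    (d : ℕ) (A : Finset (Fin d → ℝ))
    (hspan : affineSpan ℝ (A : Set (Fin d → ℝ)) = ⊤)
    (w : (Fin d → ℝ) → ℝ) (hw : ∀ a ∈ A, 0 < w a)
    (μ : (Fin d → ℝ) → (Fin d → ℝ))
    (hμ : ∀ t, μ t = (∑ a ∈ A, w a * ∏ i, t i ^ a i)⁻¹ •
        ∑ a ∈ A, (w a * ∏ i, t i ^ a i) • a) :
    Set.InjOn μ {t | ∀ i, 0 < t i} ∧
    μ '' {t | ∀ i, 0 < t i} = interior (convexHull ℝ (A : Set (Fin d → ℝ))) := by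
  have hμ' : Set.EqOn μ (momentMap A w ∘ logPairing) {t | ∀ i, 0 < t i} := fun t ht => by
    simp only [hμ, Function.comp, momentMap, centerMass, id, prod_rpow_eq_exp_logPairing ht]
  rw [hμ'.injOn_iff, hμ'.image_eq, Set.image_comp, image_logPairing, Set.image_univ,
    range_momentMap hspan hw]
  exact ⟨(momentMap_injective hspan hw).injOn.comp injOn_logPairing (Set.mapsTo_univ _ _), rfl⟩
end

section
/- Let β_{(-1,-1)}, β_{(-1,0)}, β_{(0,1)}, β_{(1,1)}, β_{(1,0)}, β_{(0,-1)} ∈ ℝ[x,y] be Wachspress's blending functions for the hexagon (each the product of the four edge forms among 1−y, 1−x, 1+y−x, 1+y, 1+x, 1+x−y not vanishing at the corresponding vertex). Then the following quadratic relation holds identically in ℝ[x,y]: β_{(-1,-1)}β_{(0,1)} + 2β_{(0,1)}β_{(0,-1)} + β_{(1,1)}β_{(0,-1)} = β_{(-1,-1)}β_{(1,0)} + 2β_{(1,0)}β_{(-1,0)} + β_{(1,1)}β_{(-1,0)}. -/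
open MvPolynomial

/-- Wachspress's blending function for the vertex `(-1,-1)` of the hexagon. -/
noncomputable def wachMM : MvPolynomial (Fin 2) ℝ :=
  (1 + X 0 - X 1) * (1 - X 1) * (1 - X 0) * (1 + X 1 - X 0)

/-- Wachspress's blending function for the vertex `(-1,0)`. -/
noncomputable def wachM0 : MvPolynomial (Fin 2) ℝ :=
  (1 - X 1) * (1 - X 0) * (1 + X 1 - X 0) * (1 + X 1)

/-- Wachspress's blending function for the vertex `(0,1)`. -/
noncomputable def wach01 : MvPolynomial (Fin 2) ℝ :=
  (1 - X 0) * (1 + X 1 - X 0) * (1 + X 1) * (1 + X 0)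

/-- Wachspress's blending function for the vertex `(1,1)`. -/
noncomputable def wach11 : MvPolynomial (Fin 2) ℝ :=
  (1 + X 1 - X 0) * (1 + X 1) * (1 + X 0) * (1 + X 0 - X 1)

/-- Wachspress's blending function for the vertex `(1,0)`. -/
noncomputable def wach10 : MvPolynomial (Fin 2) ℝ :=
  (1 + X 1) * (1 + X 0) * (1 + X 0 - X 1) * (1 - X 1)

/-- Wachspress's blending function for the vertex `(0,-1)`. -/
noncomputable def wach0M : MvPolynomial (Fin 2) ℝ :=
  (1 + X 0) * (1 + X 0 - X 1) * (1 - X 1) * (1 - X 0)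

/-- The quadratic relation
`β_{(-1,-1)}β_{(0,1)} + 2β_{(0,1)}β_{(0,-1)} + β_{(1,1)}β_{(0,-1)}
  = β_{(-1,-1)}β_{(1,0)} + 2β_{(1,0)}β_{(-1,0)} + β_{(1,1)}β_{(-1,0)}`
holds identically among Wachspress's blending functions for the hexagon. -/
theorem wachspress_hexagon_quadratic_relation :
    wachMM * wach01 + 2 * (wach01 * wach0M) + wach11 * wach0M =
      wachMM * wach10 + 2 * (wach10 * wachM0) + wach11 * wachM0 := by
  unfold wachMM wachM0 wach01 wach11 wach10 wach0M; ring
end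

section
/- Let f ∈ ℂ[X] be a polynomial of degree n ≥ 1 with f(0) ≠ 0. Suppose there exist polynomials p, q ∈ ℂ[X], with q ≠ 0 and deg p ≤ 1, deg q ≤ 1, such that q · (X · f′) = p · f, where f′ is the derivative of f. Then f is a pure power of a linear form: there exist a, α ∈ ℂ with a ≠ 0 and α ≠ 0 such that f = a·(X + α)^n. -/
/-!
Comparing root multiplicities in `q · (X · f') = p · f`: at a root `β ≠ 0` of `f` of multiplicity
`m`, the left side vanishes to order `mult_β q + m - 1` and the right side to order at least `m`,
so `β` is a root of `q`. A nonzero `q` of degree at most one has at most one root, so `f` has a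
single root over `ℂ`, and hence is a constant times a power of one linear factor.
-/

open Polynomial

namespace Polynomial

variable {R : Type*} [CommRing R] [IsDomain R]

theorem IsRoot.of_mul_derivative_eq_mul [CharZero R] {f p q : R[X]} {β : R}
    (hf' : derivative f ≠ 0) (h : q * derivative f = p * f) (hβ : f.IsRoot β) :
    q.IsRoot β := by
  rcases eq_or_ne q 0 with rfl | hq
  · exact eval_zero
  have hf : f ≠ 0 := fun hf => hf' (by rw [hf, derivative_zero])
  have hp : p ≠ 0 := by
    rintro rfl
    exact mul_ne_zero hq hf' (by rw [h, zero_mul])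
  have hmult := congrArg (rootMultiplicity β) h
  rw [rootMultiplicity_mul (mul_ne_zero hq hf'), rootMultiplicity_mul (mul_ne_zero hp hf),
    derivative_rootMultiplicity_of_root hβ] at hmult
  have hm : 0 < rootMultiplicity β f := (rootMultiplicity_pos hf).2 hβ
  exact (rootMultiplicity_pos hq).1 (by omega)

theorem eq_of_isRoot_of_natDegree_le_one {q : R[X]} (hq : q ≠ 0) (hq1 : q.natDegree ≤ 1)
    {β γ : R} (hβ : q.IsRoot β) (hγ : q.IsRoot γ) : β = γ := by
  classical
  have hcard : q.roots.toFinset.card ≤ 1 :=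
    (Multiset.toFinset_card_le _).trans (q.card_roots'.trans hq1)
  exact Finset.card_le_one.1 hcard β (Multiset.mem_toFinset.2 ((mem_roots hq).2 hβ))
    γ (Multiset.mem_toFinset.2 ((mem_roots hq).2 hγ))

theorem eq_C_leadingCoeff_mul_X_sub_C_pow {K : Type*} [Field K] [IsAlgClosed K] {f : K[X]}
    {β : K} (hroots : ∀ γ ∈ f.roots, γ = β) :
    f = C f.leadingCoeff * (X - C β) ^ f.natDegree := by
  have hcard : Multiset.card f.roots = f.natDegree := IsAlgClosed.card_roots_eq_natDegree
  have hreplicate : f.roots = Multiset.replicate f.natDegree β :=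
    Multiset.eq_replicate.2 ⟨hcard, hroots⟩
  conv_lhs => rw [← C_leadingCoeff_mul_prod_multiset_X_sub_C hcard, hreplicate,
    Multiset.map_replicate, Multiset.prod_replicate]

end Polynomial

theorem log_toric_derivative_degree_one_implies_pure_power_general
    (f : Polynomial ℂ) (hdeg : 1 ≤ f.natDegree) (hf0 : f.eval 0 ≠ 0)
    (p q : Polynomial ℂ) (hq : q ≠ 0) (hq1 : q.degree ≤ 1)
    (h : q * (X * derivative f) = p * f) :
    ∃ a α : ℂ, a ≠ 0 ∧ α ≠ 0 ∧ f = C a * (X + C α) ^ f.natDegree := by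
  have hf' : derivative f ≠ 0 := fun h0 => by
    rw [derivative_eq_zero] at h0
    omega
  have hne_zero : ∀ β, f.IsRoot β → β ≠ 0 := by
    rintro β hβ rfl
    exact hf0 hβ
  have hroot_q : ∀ β, f.IsRoot β → q.IsRoot β := fun β hβ => by
    have hqX : (q * X).IsRoot β :=
      IsRoot.of_mul_derivative_eq_mul hf' (by rw [mul_assoc, h]) hβ
    simpa [IsRoot, hne_zero β hβ] using hqX
  obtain ⟨β, hβ⟩ := IsAlgClosed.exists_root f (natDegree_pos_iff_degree_pos.1 hdeg).ne'
  have hq1' : q.natDegree ≤ 1 := natDegree_le_iff_degree_le.2 hq1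
  have hroots : ∀ γ ∈ f.roots, γ = β := fun γ hγ =>
    eq_of_isRoot_of_natDegree_le_one hq hq1' (hroot_q γ (isRoot_of_mem_roots hγ)) (hroot_q β hβ)
  refine ⟨f.leadingCoeff, -β, leadingCoeff_ne_zero.2 ?_, neg_ne_zero.2 (hne_zero β hβ), ?_⟩
  · rintro rfl
    simp at hdeg
  · rw [C_neg, ← sub_eq_add_neg]
    exact eq_C_leadingCoeff_mul_X_sub_C_pow hroots

/-- Let `f ∈ ℂ[X]` have degree `n ≥ 1` and `f(0) ≠ 0`.  If there are
polynomials `p, q` of degree at most `1`, `q ≠ 0`, with `q · (X · f') = p · f`, then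
`f` is a pure power of a linear form: `f = a (X + α)^n` with `a ≠ 0` and `α ≠ 0`. -/
theorem log_toric_derivative_degree_one_implies_pure_power
    (f : Polynomial ℂ) (hdeg : 1 ≤ f.natDegree) (hf0 : f.eval 0 ≠ 0)
    (p q : Polynomial ℂ) (hq : q ≠ 0) (hp1 : p.degree ≤ 1) (hq1 : q.degree ≤ 1)
    (h : q * (X * derivative f) = p * f) :
    ∃ a α : ℂ, a ≠ 0 ∧ α ≠ 0 ∧ f = C a * (X + C α) ^ f.natDegree :=
  log_toric_derivative_degree_one_implies_pure_power_general f hdeg hf0 p q hq hq1 h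
end

section
/- Let A = {(0,0),(1,0),(0,1),(1,1),(2,0),(0,2),(2,1),(1,2)} ⊂ ℤ² with weights w_{(0,0)}=3, w_{(1,0)}=5, w_{(0,1)}=5, w_{(1,1)}=7, w_{(2,0)}=2, w_{(0,2)}=2, w_{(2,1)}=2, w_{(1,2)}=2, and let the tuned points be b_{(0,0)}=(0,0), b_{(1,0)}=(6/5,0), b_{(0,1)}=(0,6/5), b_{(1,1)}=(8/7,8/7), b_{(2,0)}=(2,0), b_{(0,2)}=(0,2), b_{(2,1)}=(2,1), b_{(1,2)}=(1,2). Then the following identities hold in ℝ[s,t]: (i) Σ_{a∈A} w_a s^{a_1} t^{a_2} = (1+s)(1+t)(3+2s+2t); and (ii) Σ_{a∈A} w_a s^{a_1} t^{a_2} · b_a = ( 2s(2s+t+3)(1+t), 2t(s+2t+3)(1+s) ). Consequently the composition of the monomial parametrization φ_{A,w}(s,t) = [w_a s^{a_1}t^{a_2} : a ∈ A] with the tuned tautological projection π_B equals the rational map (s,t) ↦ ( 2s(2s+t+3)/((s+1)(2s+2t+3)), 2t(s+2t+3)/((t+1)(2s+2t+3)) ). -/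
open MvPolynomial

/-- For the pentagonal toric patch with exponents
`A = {(0,0),(1,0),(0,1),(1,1),(2,0),(0,2),(2,1),(1,2)}`, weights
`3,5,5,7,2,2,2,2`, and tuned points `b_{(0,0)}=(0,0)`, `b_{(1,0)}=(6/5,0)`,
`b_{(0,1)}=(0,6/5)`, `b_{(1,1)}=(8/7,8/7)`, `b_{(2,0)}=(2,0)`, `b_{(0,2)}=(0,2)`,
`b_{(2,1)}=(2,1)`, `b_{(1,2)}=(1,2)`, the following identities hold in `ℝ[s,t]`
(with `s = X 0`, `t = X 1`):
(i) `∑_a w_a s^{a₁} t^{a₂} = (1+s)(1+t)(3+2s+2t)`;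
(ii) `∑_a w_a s^{a₁} t^{a₂} · b_a = (2s(2s+t+3)(1+t), 2t(s+2t+3)(1+s))`.
Consequently the composition of the monomial parametrization `φ_{A,w}` with the
tuned tautological projection `π_B` is the rational map
`(s,t) ↦ (2s(2s+t+3)/((s+1)(2s+2t+3)), 2t(s+2t+3)/((t+1)(2s+2t+3)))`. -/
theorem pentagon_tuned_projection_closed_form :
    -- (i)  ∑_a w_a s^{a₁} t^{a₂} = (1+s)(1+t)(3+2s+2t)
    (C 3 + C 5 * X 0 + C 5 * X 1 + C 7 * (X 0 * X 1) + C 2 * X 0 ^ 2 + C 2 * X 1 ^ 2 +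
        C 2 * (X 0 ^ 2 * X 1) + C 2 * (X 0 * X 1 ^ 2) :
        MvPolynomial (Fin 2) ℝ) =
      (1 + X 0) * (1 + X 1) * (C 3 + C 2 * X 0 + C 2 * X 1) ∧
    -- (ii) first coordinate of ∑_a w_a s^{a₁} t^{a₂} • b_a
    (C 3 * C 0 + C 5 * X 0 * C (6/5) + C 5 * X 1 * C 0 + C 7 * (X 0 * X 1) * C (8/7) +
        C 2 * X 0 ^ 2 * C 2 + C 2 * X 1 ^ 2 * C 0 + C 2 * (X 0 ^ 2 * X 1) * C 2 +
        C 2 * (X 0 * X 1 ^ 2) * C 1 :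
        MvPolynomial (Fin 2) ℝ) =
      C 2 * X 0 * (C 2 * X 0 + X 1 + C 3) * (1 + X 1) ∧
    -- (ii) second coordinate of ∑_a w_a s^{a₁} t^{a₂} • b_a
    (C 3 * C 0 + C 5 * X 0 * C 0 + C 5 * X 1 * C (6/5) + C 7 * (X 0 * X 1) * C (8/7) +
        C 2 * X 0 ^ 2 * C 0 + C 2 * X 1 ^ 2 * C 2 + C 2 * (X 0 ^ 2 * X 1) * C 1 +
        C 2 * (X 0 * X 1 ^ 2) * C 2 :
        MvPolynomial (Fin 2) ℝ) =
      C 2 * X 1 * (X 0 + C 2 * X 1 + C 3) * (1 + X 0) ∧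
    -- consequence: π_B ∘ φ_{A,w} in closed form
    (∀ s t : ℝ, s + 1 ≠ 0 → t + 1 ≠ 0 → 2*s + 2*t + 3 ≠ 0 →
      (3*0 + 5*s*(6/5) + 5*t*0 + 7*(s*t)*(8/7) + 2*s^2*2 + 2*t^2*0 + 2*(s^2*t)*2 +
            2*(s*t^2)*1) /
          (3 + 5*s + 5*t + 7*(s*t) + 2*s^2 + 2*t^2 + 2*(s^2*t) + 2*(s*t^2)) =
        2*s*(2*s + t + 3) / ((s + 1) * (2*s + 2*t + 3)) ∧
      (3*0 + 5*s*0 + 5*t*(6/5) + 7*(s*t)*(8/7) + 2*s^2*0 + 2*t^2*2 + 2*(s^2*t)*1 +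
            2*(s*t^2)*2) /
          (3 + 5*s + 5*t + 7*(s*t) + 2*s^2 + 2*t^2 + 2*(s^2*t) + 2*(s*t^2)) =
        2*t*(s + 2*t + 3) / ((t + 1) * (2*s + 2*t + 3))) := by
  refine ⟨?_, ?_, ?_, ?_⟩
  · apply MvPolynomial.funext; intro x
    simp only [map_add, map_mul, map_pow, eval_C, eval_X, map_one]; ring
  · apply MvPolynomial.funext; intro x
    simp only [map_add, map_mul, map_pow, eval_C, eval_X, map_one]; ring
  · apply MvPolynomial.funext; intro x
    simp only [map_add, map_mul, map_pow, eval_C, eval_X, map_one]; ring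
  · intro s t hs ht h
    have hD : (3 + 5*s + 5*t + 7*(s*t) + 2*s^2 + 2*t^2 + 2*(s^2*t) + 2*(s*t^2)) =
        (s+1)*((t+1)*(2*s+2*t+3)) := by ring
    have h1 : (t+1)*(2*s+2*t+3) ≠ 0 := mul_ne_zero ht h
    have h2 : (s+1)*(2*s+2*t+3) ≠ 0 := mul_ne_zero hs h
    constructor
    · rw [hD, show (3*0 + 5*s*(6/5) + 5*t*0 + 7*(s*t)*(8/7) + 2*s^2*2 + 2*t^2*0 +
          2*(s^2*t)*2 + 2*(s*t^2)*1) = (2*s*(2*s + t + 3))*(t+1) by ring]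
      rw [div_eq_div_iff (mul_ne_zero hs h1) h2]; ring
    · rw [hD, show (3*0 + 5*s*0 + 5*t*(6/5) + 7*(s*t)*(8/7) + 2*s^2*0 + 2*t^2*2 +
          2*(s^2*t)*1 + 2*(s*t^2)*2) = (2*t*(s + 2*t + 3))*(s+1) by ring]
      rw [div_eq_div_iff (mul_ne_zero hs h1) (mul_ne_zero ht h)]; ring
end
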